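/- arXiv:dg-ga/9508013 — 5 statements merged into one kernel-verified Lean document; each statement's English description precedes it below -/
import Mathlib

section
/- The double bracket on g ⊕ g* satisfies the Jacobi identity ([[a,b],c] + [[b,c],a] + [[c,a],b] = 0 for all a,b,c ∈ g ⊕ g*) if and only if the compatibility (Lie bialgebra) condition holds for the pair (g, g*). (Base-point case of Theorems 2.5 and 2.6: the double of a Lie bialgebra is a Lie algebra, and conversely.) -/
open Module

/-- The double bracket on `g ⊕ g*`:
`[(x,ξ),(y,η)] = ([x,y] + ad*_ξ y − ad*_η x, [ξ,η] + ad*_x η − ad*_y ξ)`,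
where `br` is the bracket on `g*`, `ad` is the coadjoint action of `g` on `g*`
and `ad'` is the coadjoint action of `g*` on `g`. -/
def doubleBracket {g : Type*} [LieRing g] [LieAlgebra ℝ g]
    (br : Dual ℝ g → Dual ℝ g → Dual ℝ g)
    (ad : g → Dual ℝ g → Dual ℝ g)
    (ad' : Dual ℝ g → g → g)
    (a b : g × Dual ℝ g) : g × Dual ℝ g :=
  (⁅a.1, b.1⁆ + ad' a.2 b.1 - ad' b.2 a.1,
   br a.2 b.2 + ad a.1 b.2 - ad b.1 a.2)

/-- The compatibility (Lie bialgebra) condition for the pair `(g, g*)`: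
`⟨[ξ,η],[x,y]⟩ = −⟨[ad*_x ξ, η], y⟩ − ⟨[ξ, ad*_x η], y⟩ + ⟨[ad*_y ξ, η], x⟩ + ⟨[ξ, ad*_y η], x⟩`. -/
def LieBialgebraCompat {g : Type*} [LieRing g] [LieAlgebra ℝ g]
    (br : Dual ℝ g → Dual ℝ g → Dual ℝ g)
    (ad : g → Dual ℝ g → Dual ℝ g) : Prop :=
  ∀ (x y : g) (ξ η : Dual ℝ g),
    br ξ η ⁅x, y⁆ =
      - br (ad x ξ) η y - br ξ (ad x η) y + br (ad y ξ) η x + br ξ (ad y η) x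

/-! Both components of the Jacobiator of the double bracket are sums of three instances of the
compatibility defect `D(x, y, ξ, η)` (the difference of the two sides of the compatibility
condition). Pairing the `g`-component of `J((x,ξ), (y,η), (z,ζ))` with `θ` gives
`D(x,y,ζ,θ) + D(y,z,ξ,θ) + D(z,x,η,θ)` once the Jacobi identities of `g` and `g*` absorb the
remaining terms, and the `g*`-component at `w` is `D(z,w,ξ,η) + D(x,w,η,ζ) + D(y,w,ζ,ξ)`.
So compatibility gives the Jacobi identity (functionals separate points of `g`), and conversely
the `g*`-component of `J((0,ξ), (0,η), (x,0))` at `y` is `D(x,y,ξ,η)`. The action `ad'` of `g*` on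
`g` is never computed: it only occurs under a functional, where its defining relation removes it. -/

theorem lie_lie_add_lie_lie_add_lie_lie {L : Type*} [LieRing L] (x y z : L) :
    ⁅⁅x, y⁆, z⁆ + ⁅⁅y, z⁆, x⁆ + ⁅⁅z, x⁆, y⁆ = 0 := by
  rw [← lie_skew ⁅x, y⁆ z, ← lie_skew ⁅y, z⁆ x, ← lie_skew ⁅z, x⁆ y, ← neg_add, ← neg_add,
    neg_eq_zero, ← lie_jacobi x y z]
  abel

theorem LinearMap.IsAlt.leibniz_of_jacobi {R M : Type*} [CommRing R] [AddCommGroup M] [Module R M]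
    {B : M →ₗ[R] M →ₗ[R] M} (hB : B.IsAlt)
    (hjac : ∀ x y z, B (B x y) z + B (B y z) x + B (B z x) y = 0) (x y z : M) :
    B x (B y z) = B (B x y) z + B y (B x z) := by
  rw [← hB.neg (B y z) x, ← hB.neg (B x z) y, ← hB.neg z x, map_neg, LinearMap.neg_apply,
    neg_neg, neg_eq_iff_add_eq_zero, ← hjac x y z]
  abel

section

variable {g : Type*} [LieRing g] [LieAlgebra ℝ g]
  (br : Dual ℝ g →ₗ[ℝ] Dual ℝ g →ₗ[ℝ] Dual ℝ g) (ad : g → Dual ℝ g → Dual ℝ g)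
  (ad' : Dual ℝ g → g → g)

def doubleJacobiator (a b c : g × Dual ℝ g) : g × Dual ℝ g :=
  doubleBracket (fun ξ η => br ξ η) ad ad' (doubleBracket (fun ξ η => br ξ η) ad ad' a b) c
    + doubleBracket (fun ξ η => br ξ η) ad ad' (doubleBracket (fun ξ η => br ξ η) ad ad' b c) a
    + doubleBracket (fun ξ η => br ξ η) ad ad' (doubleBracket (fun ξ η => br ξ η) ad ad' c a) b

def compatDefect (x y : g) (ξ η : Dual ℝ g) : ℝ :=
  br ξ η ⁅x, y⁆ + br (ad x ξ) η y + br ξ (ad x η) y - br (ad y ξ) η x - br ξ (ad y η) x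

theorem lieBialgebraCompat_iff_compatDefect_eq_zero :
    LieBialgebraCompat (fun ξ η => br ξ η) ad ↔ ∀ x y ξ η, compatDefect br ad x y ξ η = 0 :=
  forall₄_congr fun x y ξ η => by
    unfold compatDefect
    constructor <;> intro h <;> linarith

variable {br ad ad'}

variable (had : ∀ (x : g) (ξ : Dual ℝ g) (y : g), ad x ξ y = - ξ ⁅x, y⁆)
  (had' : ∀ (ξ : Dual ℝ g) (x : g) (η : Dual ℝ g), η (ad' ξ x) = - br ξ η x)
  (hbr : br.IsAlt) (hjac : ∀ ξ η ζ, br (br ξ η) ζ + br (br η ζ) ξ + br (br ζ ξ) η = 0)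
include had had'

theorem apply_lie_ad'_left (μ ξ : Dual ℝ g) (u w : g) : μ ⁅ad' ξ u, w⁆ = - br ξ (ad w μ) u := by
  rw [← lie_skew, map_neg, ← had, had']

include hbr hjac in
theorem apply_doubleJacobiator_fst (θ : Dual ℝ g) (x y z : g) (ξ η ζ : Dual ℝ g) :
    θ (doubleJacobiator br ad ad' (x, ξ) (y, η) (z, ζ)).1 =
      compatDefect br ad x y ζ θ + compatDefect br ad y z ξ θ + compatDefect br ad z x η θ := by
  have hlie := congrArg θ (lie_lie_add_lie_lie_add_lie_lie x y z)
  have hleib (μ ν κ : Dual ℝ g) (u : g) : br μ (br ν κ) u = br (br μ ν) κ u + br ν (br μ κ) u := by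
    rw [hbr.leibniz_of_jacobi hjac, LinearMap.add_apply]
  simp only [map_add, map_zero] at hlie
  simp only [doubleJacobiator, compatDefect, doubleBracket, map_add, map_sub, LinearMap.add_apply,
    LinearMap.sub_apply, add_lie, sub_lie, had', apply_lie_ad'_left had had', Prod.fst_add]
  linear_combination hlie + hleib ξ η θ z + hleib η ζ θ x + hleib ζ ξ θ y

include hbr hjac in
theorem doubleJacobiator_snd_apply (w x y z : g) (ξ η ζ : Dual ℝ g) :
    (doubleJacobiator br ad ad' (x, ξ) (y, η) (z, ζ)).2 w =
      compatDefect br ad z w ξ η + compatDefect br ad x w η ζ + compatDefect br ad y w ζ ξ := by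
  have hswap (μ ν : Dual ℝ g) (u : g) : br μ ν u = - br ν μ u := by rw [← hbr.neg]; rfl
  simp only [doubleJacobiator, compatDefect, doubleBracket, map_add, map_sub, LinearMap.add_apply,
    LinearMap.sub_apply, add_lie, sub_lie, had, apply_lie_ad'_left had had', lie_lie, Prod.snd_add]
  have hjac_apply : br (br ξ η) ζ w + br (br η ζ) ξ w + br (br ζ ξ) η w = 0 := by
    rw [← LinearMap.add_apply, ← LinearMap.add_apply, hjac, LinearMap.zero_apply]
  linear_combination hjac_apply - hswap (ad y ξ) ζ w + hswap ξ (ad w ζ) y - hswap (ad z η) ξ w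
    + hswap η (ad w ξ) z - hswap (ad x ζ) η w + hswap ζ (ad w η) x

end

theorem double_jacobi_iff_lieBialgebraCompat_general
    {g : Type*} [LieRing g] [LieAlgebra ℝ g]
    (br : Dual ℝ g →ₗ[ℝ] Dual ℝ g →ₗ[ℝ] Dual ℝ g)
    (br_skew : ∀ ξ : Dual ℝ g, br ξ ξ = 0)
    (br_jacobi : ∀ ξ η ζ : Dual ℝ g,
      br (br ξ η) ζ + br (br η ζ) ξ + br (br ζ ξ) η = 0)
    (ad : g → Dual ℝ g → Dual ℝ g)
    (had : ∀ (x : g) (ξ : Dual ℝ g) (y : g), ad x ξ y = - ξ ⁅x, y⁆)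
    (ad' : Dual ℝ g → g → g)
    (had' : ∀ (ξ : Dual ℝ g) (x : g) (η : Dual ℝ g), η (ad' ξ x) = - br ξ η x) :
    (∀ a b c : g × Dual ℝ g,
        doubleBracket (fun ξ η => br ξ η) ad ad'
            (doubleBracket (fun ξ η => br ξ η) ad ad' a b) c
          + doubleBracket (fun ξ η => br ξ η) ad ad'
            (doubleBracket (fun ξ η => br ξ η) ad ad' b c) a
          + doubleBracket (fun ξ η => br ξ η) ad ad'
            (doubleBracket (fun ξ η => br ξ η) ad ad' c a) b = 0)
      ↔ LieBialgebraCompat (fun ξ η => br ξ η) ad := by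
  change (∀ a b c, doubleJacobiator br ad ad' a b c = 0) ↔ _
  rw [lieBialgebraCompat_iff_compatDefect_eq_zero]
  constructor
  · intro hJ x y ξ η
    have had_zero : ad 0 0 = 0 := by ext; simp [had]
    have key := doubleJacobiator_snd_apply had had' br_skew br_jacobi y 0 0 x ξ η 0
    simpa [hJ, compatDefect, had_zero] using key.symm
  · rintro hD ⟨x, ξ⟩ ⟨y, η⟩ ⟨z, ζ⟩
    ext1
    · refine (Module.forall_dual_apply_eq_zero_iff ℝ _).1 fun θ => ?_
      simp [apply_doubleJacobiator_fst had had' br_skew br_jacobi, hD]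
    · ext w
      simp [doubleJacobiator_snd_apply had had' br_skew br_jacobi, hD]

/-- the double bracket on `g ⊕ g*` satisfies the Jacobi identity iff the
compatibility (Lie bialgebra) condition holds for the pair `(g, g*)`. -/
theorem double_jacobi_iff_lieBialgebraCompat
    {g : Type*} [LieRing g] [LieAlgebra ℝ g] [FiniteDimensional ℝ g]
    (br : Dual ℝ g →ₗ[ℝ] Dual ℝ g →ₗ[ℝ] Dual ℝ g)
    (br_skew : ∀ ξ : Dual ℝ g, br ξ ξ = 0)
    (br_jacobi : ∀ ξ η ζ : Dual ℝ g,
      br (br ξ η) ζ + br (br η ζ) ξ + br (br ζ ξ) η = 0)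
    (ad : g → Dual ℝ g → Dual ℝ g)
    (had : ∀ (x : g) (ξ : Dual ℝ g) (y : g), ad x ξ y = - ξ ⁅x, y⁆)
    (ad' : Dual ℝ g → g → g)
    (had' : ∀ (ξ : Dual ℝ g) (x : g) (η : Dual ℝ g), η (ad' ξ x) = - br ξ η x) :
    (∀ a b c : g × Dual ℝ g,
        doubleBracket (fun ξ η => br ξ η) ad ad'
            (doubleBracket (fun ξ η => br ξ η) ad ad' a b) c
          + doubleBracket (fun ξ η => br ξ η) ad ad'
            (doubleBracket (fun ξ η => br ξ η) ad ad' b c) a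
          + doubleBracket (fun ξ η => br ξ η) ad ad'
            (doubleBracket (fun ξ η => br ξ η) ad ad' c a) b = 0)
      ↔ LieBialgebraCompat (fun ξ η => br ξ η) ad :=
  double_jacobi_iff_lieBialgebraCompat_general br br_skew br_jacobi ad had ad' had'
end

section
/- For any Lie algebra structures on g and on g* (no compatibility assumed), the symmetric pairing on g ⊕ g* is invariant under the double bracket: ([a,b], c)_+ + (b, [a,c])_+ = 0 for all a,b,c ∈ g ⊕ g*. (Base-point case of axiom (v) of a Courant algebroid for the double, Proposition 4.4.) -/
open Module

/-- The symmetric pairing `((x,ξ),(y,η))_+ = (1/2)(⟨ξ,y⟩ + ⟨η,x⟩)` on `g ⊕ g*`. -/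
noncomputable def pairPlus {g : Type*} [LieRing g] [LieAlgebra ℝ g]
    (a b : g × Dual ℝ g) : ℝ :=
  (1 / 2) * (a.2 b.1 + b.2 a.1)

/-! Writing `a = (x,ξ)`, `b = (y,η)`, `c = (z,ζ)`, the coadjoint actions move every bracket in
`2 ([a,b],c)_+` onto a single slot, giving the cyclic sum
`⟨ζ,[x,y]⟩ + ⟨ξ,[y,z]⟩ + ⟨η,[z,x]⟩ + ⟨[ξ,η],z⟩ + ⟨[η,ζ],x⟩ + ⟨[ζ,ξ],y⟩`.
Skew-symmetry of the two brackets makes this form alternating in `a, b, c`, and invariance is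
its antisymmetry in `b, c`. -/

def doubleCartanForm {g : Type*} [LieRing g] [LieAlgebra ℝ g]
    (br : Dual ℝ g → Dual ℝ g → Dual ℝ g) (a b c : g × Dual ℝ g) : ℝ :=
  c.2 ⁅a.1, b.1⁆ + a.2 ⁅b.1, c.1⁆ + b.2 ⁅c.1, a.1⁆
    + br a.2 b.2 c.1 + br b.2 c.2 a.1 + br c.2 a.2 b.1

section DoubleCartanForm

variable {g : Type*} [LieRing g] [LieAlgebra ℝ g] {br : Dual ℝ g → Dual ℝ g → Dual ℝ g}

theorem pairPlus_comm (a b : g × Dual ℝ g) : pairPlus a b = pairPlus b a := by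
  unfold pairPlus; ring

theorem doubleCartanForm_swap_right (hbr : ∀ ξ η, br η ξ = -br ξ η) (a b c : g × Dual ℝ g) :
    doubleCartanForm br a c b = -doubleCartanForm br a b c := by
  rw [doubleCartanForm, doubleCartanForm, hbr c.2 a.2, hbr b.2 c.2, hbr a.2 b.2,
    ← lie_skew a.1 c.1, ← lie_skew c.1 b.1, ← lie_skew b.1 a.1]
  simp only [map_neg, LinearMap.neg_apply]
  ring

theorem pairPlus_doubleBracket (hbr : ∀ ξ η, br η ξ = -br ξ η)
    {ad : g → Dual ℝ g → Dual ℝ g} (had : ∀ x ξ y, ad x ξ y = -ξ ⁅x, y⁆)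
    {ad' : Dual ℝ g → g → g} (had' : ∀ ξ x η, η (ad' ξ x) = -br ξ η x)
    (a b c : g × Dual ℝ g) :
    pairPlus (doubleBracket br ad ad' a b) c = (1 / 2) * doubleCartanForm br a b c := by
  simp only [pairPlus, doubleBracket, doubleCartanForm, LinearMap.add_apply, LinearMap.sub_apply,
    map_add, map_sub, had, had']
  rw [hbr c.2 a.2, ← lie_skew c.1 a.1]
  simp only [map_neg, LinearMap.neg_apply]
  ring

end DoubleCartanForm

theorem double_pairing_invariant_general
    {g : Type*} [LieRing g] [LieAlgebra ℝ g]
    (br : Dual ℝ g →ₗ[ℝ] Dual ℝ g →ₗ[ℝ] Dual ℝ g)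
    (br_skew : ∀ ξ : Dual ℝ g, br ξ ξ = 0)
    (ad : g → Dual ℝ g → Dual ℝ g)
    (had : ∀ (x : g) (ξ : Dual ℝ g) (y : g), ad x ξ y = - ξ ⁅x, y⁆)
    (ad' : Dual ℝ g → g → g)
    (had' : ∀ (ξ : Dual ℝ g) (x : g) (η : Dual ℝ g), η (ad' ξ x) = - br ξ η x) :
    ∀ a b c : g × Dual ℝ g,
      pairPlus (doubleBracket (fun ξ η => br ξ η) ad ad' a b) c
        + pairPlus b (doubleBracket (fun ξ η => br ξ η) ad ad' a c) = 0 := by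
  have hbr : ∀ ξ η, br η ξ = -br ξ η := fun ξ η => (LinearMap.IsAlt.neg br_skew ξ η).symm
  intro a b c
  rw [pairPlus_comm b, pairPlus_doubleBracket hbr had had', pairPlus_doubleBracket hbr had had',
    doubleCartanForm_swap_right hbr]
  ring

/-- for any Lie algebra structures on `g` and `g*` (no compatibility
assumed), the symmetric pairing on `g ⊕ g*` is invariant under the double bracket:
`([a,b],c)_+ + (b,[a,c])_+ = 0`. -/
theorem double_pairing_invariant
    {g : Type*} [LieRing g] [LieAlgebra ℝ g] [FiniteDimensional ℝ g]
    (br : Dual ℝ g →ₗ[ℝ] Dual ℝ g →ₗ[ℝ] Dual ℝ g)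
    (br_skew : ∀ ξ : Dual ℝ g, br ξ ξ = 0)
    (br_jacobi : ∀ ξ η ζ : Dual ℝ g,
      br (br ξ η) ζ + br (br η ζ) ξ + br (br ζ ξ) η = 0)
    (ad : g → Dual ℝ g → Dual ℝ g)
    (had : ∀ (x : g) (ξ : Dual ℝ g) (y : g), ad x ξ y = - ξ ⁅x, y⁆)
    (ad' : Dual ℝ g → g → g)
    (had' : ∀ (ξ : Dual ℝ g) (x : g) (η : Dual ℝ g), η (ad' ξ x) = - br ξ η x) :
    ∀ a b c : g × Dual ℝ g,
      pairPlus (doubleBracket (fun ξ η => br ξ η) ad ad' a b) c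
        + pairPlus b (doubleBracket (fun ξ η => br ξ η) ad ad' a c) = 0 :=
  double_pairing_invariant_general br br_skew ad had ad' had'
end

section
/- Let E be a finite-dimensional real Lie algebra with a nondegenerate ad-invariant symmetric bilinear form B, and let L1, L2 be Lie subalgebras of E that are both isotropic and complementary (E = L1 ⊕ L2 as vector spaces). Then the map φ : L2 → L1* given by φ(ξ) = 2B(ξ, ·)|_{L1} is a linear isomorphism, and the Lie algebra structure transported from L2 to L1* via φ, together with the Lie algebra structure of L1, satisfies the compatibility (Lie bialgebra) condition. (Base-point case of Theorem 2.6: a Manin triple determines a Lie bialgebra.) -/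
/-!
Since `L₁` and `L₂` are isotropic and span `E`, nondegeneracy of `B` makes both pairings
`L₂ → L₁*` and `L₁ → L₂*` injective, so by dimension count they are isomorphisms. Under this
identification the coadjoint action of `x ∈ L₁` on `ξ ∈ L₂` is `q ⁅x, ξ⁆`, where `q` is the
projection onto `L₂` along `L₁`. Isotropy of both summands gives `B (q a) b + B (q b) a = B a b`,
and with invariance this reduces the compatibility condition to
`B ⁅ξ, η⁆ ⁅x, y⁆ = B ⁅x, ξ⁆ ⁅y, η⁆ - B ⁅x, η⁆ ⁅y, ξ⁆`, the Jacobi identity read through `B`.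
-/

open Module Function Submodule

namespace LinearMap.BilinForm

variable {R K E : Type*}

section Isotropic

variable [CommRing R] [AddCommGroup E] [Module R E]

def IsIsotropic (B : LinearMap.BilinForm R E) (V : Submodule R E) : Prop :=
  ∀ x ∈ V, ∀ y ∈ V, B x y = 0

variable {B : LinearMap.BilinForm R E} {V W : Submodule R E}

theorem apply_projection_of_mem (hV : B.IsIsotropic V) (h : IsCompl V W) (z : E) {y : E}
    (hy : y ∈ V) : B (W.projection V h.symm z) y = B z y := by
  conv_rhs => rw [← projection_add_projection_eq_self h z]
  rw [map_add, LinearMap.add_apply, hV _ (projection_apply_mem h z) _ hy, zero_add]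

theorem apply_projection_add_apply_projection_swap (hS : B.IsSymm) (hV : B.IsIsotropic V)
    (hW : B.IsIsotropic W) (h : IsCompl V W) (a b : E) :
    B (W.projection V h.symm a) b + B (W.projection V h.symm b) a = B a b := by
  set p := V.projection W h
  set q := W.projection V h.symm
  have hb : p b + q b = b := projection_add_projection_eq_self h b
  have hpb : B (q a) (p b) = B a (p b) :=
    apply_projection_of_mem hV h a (projection_apply_mem h b)
  have hqb : B (q a) (q b) = 0 := hW _ (projection_apply_mem _ a) _ (projection_apply_mem _ b)
  calc B (q a) b + B (q b) a = B (q a) (p b) + B (q a) (q b) + B a (q b) := by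
        rw [← map_add, hb, hS.eq (q b)]
    _ = B a b := by rw [hpb, hqb, add_zero, ← map_add, hb]

theorem injective_domRestrict₁₂ (hB : B.SeparatingLeft) (hW : B.IsIsotropic W)
    (h : Codisjoint V W) : Injective (B.domRestrict₁₂ W V) := by
  refine (injective_iff_map_eq_zero _).2 fun ξ hξ => Subtype.ext <| hB ξ fun z => ?_
  obtain ⟨v, hv, w, hw, rfl⟩ := mem_sup.1 (codisjoint_iff.1 h ▸ mem_top : z ∈ V ⊔ W)
  rw [map_add, hW _ ξ.2 _ hw, add_zero]
  exact congr($hξ ⟨v, hv⟩)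

end Isotropic

theorem isPerfPair_domRestrict₁₂ [Field K] [AddCommGroup E] [Module K E] [FiniteDimensional K E]
    {B : LinearMap.BilinForm K E} {V W : Submodule K E} (hS : B.IsSymm) (hB : B.SeparatingLeft)
    (hV : B.IsIsotropic V) (hW : B.IsIsotropic W) (h : IsCompl V W) :
    (B.domRestrict₁₂ W V).IsPerfPair := by
  refine .of_injective (injective_domRestrict₁₂ hB hW h.codisjoint) ?_
  have hflip : (B.domRestrict₁₂ W V).flip = B.domRestrict₁₂ V W := by
    ext x y; exact hS.eq _ _
  exact hflip ▸ injective_domRestrict₁₂ hB hV h.symm.codisjoint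

section Lie

variable [CommRing R] [LieRing E] [LieAlgebra R E] {B : LinearMap.BilinForm R E}

theorem lieInvariant.apply_lie_eq (hB : B.lieInvariant E) (x y z : E) :
    B ⁅x, y⁆ z = B x ⁅y, z⁆ := by
  rw [← lie_skew, map_neg, LinearMap.neg_apply, hB, neg_neg]

theorem lieInvariant.apply_lie_eq_apply_lie_swap (hB : B.lieInvariant E) (hS : B.IsSymm)
    (x y z : E) : B ⁅x, y⁆ z = B y ⁅z, x⁆ := by
  rw [hB.apply_lie_eq, hS.eq, hB.apply_lie_eq]

theorem lieInvariant.apply_lie_lie (hB : B.lieInvariant E) (hS : B.IsSymm) (x y ξ η : E) :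
    B ⁅ξ, η⁆ ⁅x, y⁆ = B ⁅x, ξ⁆ ⁅y, η⁆ - B ⁅x, η⁆ ⁅y, ξ⁆ :=
  calc B ⁅ξ, η⁆ ⁅x, y⁆ = B ξ ⁅⁅η, x⁆, y⁆ + B ξ ⁅x, ⁅η, y⁆⁆ := by
        rw [hB.apply_lie_eq, leibniz_lie, map_add]
    _ = B ⁅η, x⁆ ⁅y, ξ⁆ + B ⁅ξ, x⁆ ⁅η, y⁆ := by
        rw [hS.eq ξ, hB.apply_lie_eq ⁅η, x⁆, ← hB.apply_lie_eq ξ x]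
    _ = B ⁅x, ξ⁆ ⁅y, η⁆ - B ⁅x, η⁆ ⁅y, ξ⁆ := by
        rw [← lie_skew x η, ← lie_skew x ξ, ← lie_skew y η]
        simp only [map_neg, LinearMap.neg_apply, neg_neg]
        ring

theorem lieInvariant.apply_lie_lie_eq_of_apply_add_apply_swap (hB : B.lieInvariant E)
    (hS : B.IsSymm) {q : E → E} (hq : ∀ a b, B (q a) b + B (q b) a = B a b) (x y ξ η : E) :
    B ⁅ξ, η⁆ ⁅x, y⁆ = -B ⁅q ⁅x, ξ⁆, η⁆ y - B ⁅ξ, q ⁅x, η⁆⁆ y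
      + B ⁅q ⁅y, ξ⁆, η⁆ x + B ⁅ξ, q ⁅y, η⁆⁆ x := by
  have hleft (u v w : E) : B ⁅u, v⁆ w = -B u ⁅w, v⁆ := by
    rw [hB.apply_lie_eq, ← lie_skew w v, map_neg, neg_neg]
  have hright (u v w : E) : B ⁅u, v⁆ w = B v ⁅w, u⁆ := hB.apply_lie_eq_apply_lie_swap hS u v w
  rw [hB.apply_lie_lie hS, hleft (q _), hright ξ (q _), hleft (q _), hright ξ (q _)]
  linear_combination hq ⁅x, η⁆ ⁅y, ξ⁆ - hq ⁅x, ξ⁆ ⁅y, η⁆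

end Lie

end LinearMap.BilinForm

open LinearMap.BilinForm in
/-- a Manin triple determines a Lie bialgebra.  Let `E` be a
finite-dimensional real Lie algebra with a nondegenerate ad-invariant symmetric
bilinear form `B`, and let `L₁, L₂` be complementary isotropic Lie subalgebras.
Then `φ : L₂ → L₁*`, `φ(ξ) = 2B(ξ,·)|_{L₁}`, is a linear isomorphism, and the Lie
algebra structure transported from `L₂` to `L₁*` via `φ` together with that of `L₁`
satisfies the compatibility (Lie bialgebra) condition; the latter is expressed via
the pairing `⟨ξ,x⟩ = 2B(ξ,x)` between `L₂` and `L₁`, with the coadjoint action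
`ad*` of `L₁` on `L₂` determined by `⟨ad*_x ξ, y⟩ = −⟨ξ,[x,y]⟩`. -/
theorem manin_triple_gives_lie_bialgebra
    {E : Type*} [LieRing E] [LieAlgebra ℝ E] [FiniteDimensional ℝ E]
    (B : LinearMap.BilinForm ℝ E)
    (hB_symm : ∀ x y : E, B x y = B y x)
    (hB_nondeg : ∀ x : E, (∀ y : E, B x y = 0) → x = 0)
    (hB_inv : ∀ x y z : E, B ⁅z, x⁆ y + B x ⁅z, y⁆ = 0)
    (L₁ L₂ : LieSubalgebra ℝ E)
    (h₁_iso : ∀ x ∈ L₁, ∀ y ∈ L₁, B x y = 0)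
    (h₂_iso : ∀ x ∈ L₂, ∀ y ∈ L₂, B x y = 0)
    (h_compl : IsCompl L₁.toSubmodule L₂.toSubmodule) :
    (∃ φ : L₂ ≃ₗ[ℝ] Dual ℝ L₁, ∀ (ξ : L₂) (x : L₁), φ ξ x = 2 * B ξ x) ∧
    (∃ ad : L₁ → L₂ → L₂,
      (∀ (x : L₁) (ξ : L₂) (y : L₁),
        2 * B (ad x ξ : E) (y : E) = -(2 * B (ξ : E) (⁅x, y⁆ : L₁))) ∧
      (∀ (x y : L₁) (ξ η : L₂),
        2 * B (⁅ξ, η⁆ : L₂) (⁅x, y⁆ : L₁) =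
          - (2 * B (⁅ad x ξ, η⁆ : L₂) (y : E))
          - (2 * B (⁅ξ, ad x η⁆ : L₂) (y : E))
          + (2 * B (⁅ad y ξ, η⁆ : L₂) (x : E))
          + (2 * B (⁅ξ, ad y η⁆ : L₂) (x : E)))) := by
  have hS : B.IsSymm := ⟨hB_symm⟩
  have hB : B.lieInvariant E := fun z x y => eq_neg_of_add_eq_zero_left (hB_inv x y z)
  have := isPerfPair_domRestrict₁₂ hS hB_nondeg h₁_iso h₂_iso h_compl
  refine ⟨⟨(B.domRestrict₁₂ L₂.toSubmodule L₁.toSubmodule).toPerfPair.trans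
    (LinearEquiv.smulOfNeZero ℝ _ 2 two_ne_zero), fun ξ x => rfl⟩, ?_⟩
  set q := L₂.toSubmodule.projection L₁.toSubmodule h_compl.symm
  refine ⟨fun x ξ => ⟨q ⁅(x : E), (ξ : E)⁆, projection_apply_mem _ _⟩, fun x ξ y => ?_,
    fun x y ξ η => ?_⟩
  · change 2 * B (q ⁅(x : E), (ξ : E)⁆) y = -(2 * B ξ ⁅(x : E), (y : E)⁆)
    rw [apply_projection_of_mem h₁_iso h_compl _ y.2, hB]
    ring
  · have hcompat := hB.apply_lie_lie_eq_of_apply_add_apply_swap hS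
      (apply_projection_add_apply_projection_swap hS h₁_iso h₂_iso h_compl) x y ξ η
    simp only [LieSubalgebra.coe_bracket]
    linear_combination 2 * hcompat
end

section
/- Assume the pair (g, g*) satisfies the compatibility (Lie bialgebra) condition, and let H : g* → g be a linear map that is skew-symmetric (⟨ξ, Hη⟩ = −⟨η, Hξ⟩ for all ξ,η ∈ g*). Then the graph {(Hξ, ξ) : ξ ∈ g*} is closed under the double bracket on g ⊕ g* (i.e., is a Lie subalgebra of the double) if and only if for all ξ,η,ζ ∈ g*: ⟨ζ,[Hξ,Hη]⟩ + ⟨ξ,[Hη,Hζ]⟩ + ⟨η,[Hζ,Hξ]⟩ + ⟨[ξ,η],Hζ⟩ + ⟨[η,ζ],Hξ⟩ + ⟨[ζ,ξ],Hη⟩ = 0 — the Maurer–Cartan equation d_*H + (1/2)[H,H] = 0 written out on triples of covectors. (Base-point case of Theorem 6.1.) -/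
open Module

/-!
Pairing the defect `[(Hξ, ξ), (Hη, η)].1 - H [(Hξ, ξ), (Hη, η)].2` with a third covector `ζ`
and moving every term onto `ζ` by the coadjoint identities and the skew-symmetry of `H`
and of the bracket on `g*` yields exactly the Maurer–Cartan expression in `ξ, η, ζ`.
Since a pair `(x, μ)` lies on the graph iff `x = Hμ`, and covectors separate points,
closedness of the graph is the vanishing of that expression.
-/

theorem exists_eq_graph_iff {α β : Type*} (f : β → α) (a : α × β) :
    (∃ b, a = (f b, b)) ↔ a.1 = f a.2 :=
  ⟨fun ⟨_, hb⟩ => hb ▸ rfl, fun h => ⟨a.2, Prod.ext h rfl⟩⟩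

section DoubleBracket

variable {g : Type*} [LieRing g] [LieAlgebra ℝ g]
  {br : Dual ℝ g →ₗ[ℝ] Dual ℝ g →ₗ[ℝ] Dual ℝ g} {ad : g → Dual ℝ g → Dual ℝ g}
  {ad' : Dual ℝ g → g → g} {H : Dual ℝ g →ₗ[ℝ] g}

theorem apply_doubleBracket_graph_fst_sub (br_skew : br.IsAlt)
    (had : ∀ (x : g) (ξ : Dual ℝ g) (y : g), ad x ξ y = - ξ ⁅x, y⁆)
    (had' : ∀ (ξ : Dual ℝ g) (x : g) (η : Dual ℝ g), η (ad' ξ x) = - br ξ η x)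
    (H_skew : ∀ ξ η : Dual ℝ g, ξ (H η) = - η (H ξ)) (ξ η ζ : Dual ℝ g) :
    let b := doubleBracket (fun ξ η => br ξ η) ad ad' (H ξ, ξ) (H η, η)
    ζ (b.1 - H b.2) =
      ζ ⁅H ξ, H η⁆ + ξ ⁅H η, H ζ⁆ + η ⁅H ζ, H ξ⁆
        + br ξ η (H ζ) + br η ζ (H ξ) + br ζ ξ (H η) := by
  simp only [doubleBracket, map_add, map_sub, had', H_skew ζ, had]
  rw [← br_skew.neg ξ ζ, ← lie_skew (H ζ) (H ξ), map_neg]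
  simp only [LinearMap.neg_apply]
  ring

end DoubleBracket

theorem graph_closed_iff_maurer_cartan_general
    {g : Type*} [LieRing g] [LieAlgebra ℝ g]
    (br : Dual ℝ g →ₗ[ℝ] Dual ℝ g →ₗ[ℝ] Dual ℝ g)
    (br_skew : ∀ ξ : Dual ℝ g, br ξ ξ = 0)
    (ad : g → Dual ℝ g → Dual ℝ g)
    (had : ∀ (x : g) (ξ : Dual ℝ g) (y : g), ad x ξ y = - ξ ⁅x, y⁆)
    (ad' : Dual ℝ g → g → g)
    (had' : ∀ (ξ : Dual ℝ g) (x : g) (η : Dual ℝ g), η (ad' ξ x) = - br ξ η x)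
    (H : Dual ℝ g →ₗ[ℝ] g)
    (H_skew : ∀ ξ η : Dual ℝ g, ξ (H η) = - η (H ξ)) :
    (∀ ξ η : Dual ℝ g, ∃ ζ : Dual ℝ g,
        doubleBracket (fun ξ η => br ξ η) ad ad' (H ξ, ξ) (H η, η) = (H ζ, ζ))
      ↔ (∀ ξ η ζ : Dual ℝ g,
          ζ ⁅H ξ, H η⁆ + ξ ⁅H η, H ζ⁆ + η ⁅H ζ, H ξ⁆
            + br ξ η (H ζ) + br η ζ (H ξ) + br ζ ξ (H η) = 0) := by
  refine forall₂_congr fun ξ η => ?_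
  rw [exists_eq_graph_iff, ← sub_eq_zero, ← Module.forall_dual_apply_eq_zero_iff ℝ]
  exact forall_congr' fun ζ => by
    rw [apply_doubleBracket_graph_fst_sub br_skew had had' H_skew]

/-- for a Lie bialgebra `(g, g*)` and a skew-symmetric linear map
`H : g* → g`, the graph `{(Hξ, ξ)}` is closed under the double bracket iff `H`
satisfies the Maurer–Cartan equation `d_*H + (1/2)[H,H] = 0`, written out on
triples of covectors. -/
theorem graph_closed_iff_maurer_cartan
    {g : Type*} [LieRing g] [LieAlgebra ℝ g] [FiniteDimensional ℝ g]
    (br : Dual ℝ g →ₗ[ℝ] Dual ℝ g →ₗ[ℝ] Dual ℝ g)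
    (br_skew : ∀ ξ : Dual ℝ g, br ξ ξ = 0)
    (br_jacobi : ∀ ξ η ζ : Dual ℝ g,
      br (br ξ η) ζ + br (br η ζ) ξ + br (br ζ ξ) η = 0)
    (ad : g → Dual ℝ g → Dual ℝ g)
    (had : ∀ (x : g) (ξ : Dual ℝ g) (y : g), ad x ξ y = - ξ ⁅x, y⁆)
    (ad' : Dual ℝ g → g → g)
    (had' : ∀ (ξ : Dual ℝ g) (x : g) (η : Dual ℝ g), η (ad' ξ x) = - br ξ η x)
    (hcompat : LieBialgebraCompat (fun ξ η => br ξ η) ad)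
    (H : Dual ℝ g →ₗ[ℝ] g)
    (H_skew : ∀ ξ η : Dual ℝ g, ξ (H η) = - η (H ξ)) :
    (∀ ξ η : Dual ℝ g, ∃ ζ : Dual ℝ g,
        doubleBracket (fun ξ η => br ξ η) ad ad' (H ξ, ξ) (H η, η) = (H ζ, ζ))
      ↔ (∀ ξ η ζ : Dual ℝ g,
          ζ ⁅H ξ, H η⁆ + ξ ⁅H η, H ζ⁆ + η ⁅H ζ, H ξ⁆
            + br ξ η (H ζ) + br η ζ (H ξ) + br ζ ξ (H η) = 0) :=
  graph_closed_iff_maurer_cartan_general br br_skew ad had ad' had' H H_skew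
end

section
/- Assume the pair (g, g*) satisfies the compatibility (Lie bialgebra) condition. Let h ⊆ g be a linear subspace and h° = {ξ ∈ g* : ξ(x) = 0 for all x ∈ h} its annihilator. Then the subspace h ⊕ h° of g ⊕ g* is closed under the double bracket if and only if h is a Lie subalgebra of g and h° is a Lie subalgebra of g*. (Base-point case of Proposition 7.1 on null Dirac structures.) -/
open Module

/-! Since `h` is the common kernel of `h°`, pairing with `η ∈ h°` shows that `ad'_ξ w ∈ h`
whenever `⟨[ξ, η], w⟩ = 0` for all `η ∈ h°`. So if `h` and `h°` are subalgebras, every term of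
the double bracket of two elements of `h ⊕ h°` lies in `h ⊕ h°`; conversely, the two subalgebra
conditions are the double brackets of `(x, 0), (y, 0)` and of `(0, ξ), (0, η)`. -/

theorem Subspace.mem_of_forall_dual_vanishing {K V : Type*} [Field K] [AddCommGroup V]
    [Module K V] {W : Subspace K V} {v : V}
    (hv : ∀ φ : Dual K V, (∀ w ∈ W, φ w = 0) → φ v = 0) : v ∈ W := by
  rw [← Subspace.dualAnnihilator_dualCoannihilator_eq (W := W), Submodule.mem_dualCoannihilator]
  exact fun φ hφ => hv φ ((Submodule.mem_dualAnnihilator φ).1 hφ)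

section Coadjoint

variable {g : Type*} [AddCommGroup g] [Module ℝ g]
  {br : Dual ℝ g →ₗ[ℝ] Dual ℝ g →ₗ[ℝ] Dual ℝ g} {ad' : Dual ℝ g → g → g}

theorem coadjoint_zero_apply
    (had' : ∀ (ξ : Dual ℝ g) (x : g) (η : Dual ℝ g), η (ad' ξ x) = - br ξ η x) (x : g) :
    ad' 0 x = 0 :=
  (forall_dual_apply_eq_zero_iff ℝ _).1 fun η => by simp [had']

theorem coadjoint_mem_of_forall_bracket_annihilator
    (had' : ∀ (ξ : Dual ℝ g) (x : g) (η : Dual ℝ g), η (ad' ξ x) = - br ξ η x)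
    {h : Submodule ℝ g} {ξ : Dual ℝ g} {w : g}
    (hξw : ∀ η : Dual ℝ g, (∀ z ∈ h, η z = 0) → br ξ η w = 0) :
    ad' ξ w ∈ h :=
  Subspace.mem_of_forall_dual_vanishing fun η hη => by rw [had', hξw η hη, neg_zero]

end Coadjoint

theorem null_dirac_iff_subalgebras_general
    {g : Type*} [LieRing g] [LieAlgebra ℝ g]
    (br : Dual ℝ g →ₗ[ℝ] Dual ℝ g →ₗ[ℝ] Dual ℝ g)
    (ad : g → Dual ℝ g → Dual ℝ g)
    (had : ∀ (x : g) (ξ : Dual ℝ g) (y : g), ad x ξ y = - ξ ⁅x, y⁆)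
    (ad' : Dual ℝ g → g → g)
    (had' : ∀ (ξ : Dual ℝ g) (x : g) (η : Dual ℝ g), η (ad' ξ x) = - br ξ η x)
    (h : Submodule ℝ g) :
    (∀ x ∈ h, ∀ y ∈ h, ∀ ξ η : Dual ℝ g,
        (∀ z ∈ h, ξ z = 0) → (∀ z ∈ h, η z = 0) →
        (doubleBracket (fun ξ η => br ξ η) ad ad' (x, ξ) (y, η)).1 ∈ h ∧
        (∀ z ∈ h, (doubleBracket (fun ξ η => br ξ η) ad ad' (x, ξ) (y, η)).2 z = 0))
      ↔ ((∀ x ∈ h, ∀ y ∈ h, ⁅x, y⁆ ∈ h) ∧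
         (∀ ξ η : Dual ℝ g, (∀ z ∈ h, ξ z = 0) → (∀ z ∈ h, η z = 0) →
           ∀ z ∈ h, br ξ η z = 0)) := by
  constructor
  · intro H
    refine ⟨fun x hx y hy => ?_, fun ξ η hξ hη z hz => ?_⟩
    · simpa [doubleBracket, coadjoint_zero_apply had'] using
        (H x hx y hy 0 0 (by simp) (by simp)).1
    · simpa [doubleBracket, had] using (H 0 h.zero_mem 0 h.zero_mem ξ η hξ hη).2 z hz
  · rintro ⟨hh, hann⟩ x hx y hy ξ η hξ hη
    have hcoad : ∀ ξ : Dual ℝ g, (∀ z ∈ h, ξ z = 0) → ∀ w ∈ h, ad' ξ w ∈ h :=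
      fun ξ hξ w hw => coadjoint_mem_of_forall_bracket_annihilator had' fun η hη =>
        hann ξ η hξ hη w hw
    refine ⟨h.sub_mem (h.add_mem (hh x hx y hy) (hcoad ξ hξ y hy)) (hcoad η hη x hx),
      fun z hz => ?_⟩
    simp only [doubleBracket, LinearMap.add_apply, LinearMap.sub_apply, had,
      hann ξ η hξ hη z hz, hη _ (hh x hx z hz), hξ _ (hh y hy z hz)]
    simp

/-- for a Lie bialgebra `(g, g*)`, a linear subspace `h ⊆ g` and its
annihilator `h° ⊆ g*`, the subspace `h ⊕ h°` of `g ⊕ g*` is closed under the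
double bracket iff `h` is a Lie subalgebra of `g` and `h°` is a Lie subalgebra of
`g*` (null Dirac structures, base-point case of Proposition 7.1). -/
theorem null_dirac_iff_subalgebras
    {g : Type*} [LieRing g] [LieAlgebra ℝ g] [FiniteDimensional ℝ g]
    (br : Dual ℝ g →ₗ[ℝ] Dual ℝ g →ₗ[ℝ] Dual ℝ g)
    (br_skew : ∀ ξ : Dual ℝ g, br ξ ξ = 0)
    (br_jacobi : ∀ ξ η ζ : Dual ℝ g,
      br (br ξ η) ζ + br (br η ζ) ξ + br (br ζ ξ) η = 0)
    (ad : g → Dual ℝ g → Dual ℝ g)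
    (had : ∀ (x : g) (ξ : Dual ℝ g) (y : g), ad x ξ y = - ξ ⁅x, y⁆)
    (ad' : Dual ℝ g → g → g)
    (had' : ∀ (ξ : Dual ℝ g) (x : g) (η : Dual ℝ g), η (ad' ξ x) = - br ξ η x)
    (hcompat : LieBialgebraCompat (fun ξ η => br ξ η) ad)
    (h : Submodule ℝ g) :
    (∀ x ∈ h, ∀ y ∈ h, ∀ ξ η : Dual ℝ g,
        (∀ z ∈ h, ξ z = 0) → (∀ z ∈ h, η z = 0) →
        (doubleBracket (fun ξ η => br ξ η) ad ad' (x, ξ) (y, η)).1 ∈ h ∧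
        (∀ z ∈ h, (doubleBracket (fun ξ η => br ξ η) ad ad' (x, ξ) (y, η)).2 z = 0))
      ↔ ((∀ x ∈ h, ∀ y ∈ h, ⁅x, y⁆ ∈ h) ∧
         (∀ ξ η : Dual ℝ g, (∀ z ∈ h, ξ z = 0) → (∀ z ∈ h, η z = 0) →
           ∀ z ∈ h, br ξ η z = 0)) :=
  null_dirac_iff_subalgebras_general br ad had ad' had' h
end
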